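/- arXiv:1405.6476 — 8 statements merged into one kernel-verified Lean document; each statement's English description precedes it below -/
import Mathlib

section
/- Every 2×2 real matrix A admits a symplectic dilation of order 4: there exist 2×2 real matrices B, C, D such that [[A,B],[C,D]] ∈ Sp(4). -/
open Matrix

/-- The 2x2 matrix J₂ = [[0,-1],[1,0]]. -/
def J2 : Matrix (Fin 2) (Fin 2) ℝ := !![0, -1; 1, 0]

/-- The 2n x 2n block-diagonal matrix with n diagonal blocks J₂. -/
def J (n : ℕ) : Matrix (Fin (2*n)) (Fin (2*n)) ℝ :=
  Matrix.of fun i j =>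
    if i.val = j.val + 1 ∧ j.val % 2 = 0 then 1
    else if j.val = i.val + 1 ∧ i.val % 2 = 0 then -1 else 0
/-- Every 2×2 real matrix admits a symplectic dilation of order 4. -/
theorem two_by_two_symplectic_dilation (A : Matrix (Fin 2) (Fin 2) ℝ) :
    ∃ B C D : Matrix (Fin 2) (Fin 2) ℝ,
      (Matrix.fromBlocks A B C D)ᵀ * Matrix.fromBlocks J2 0 0 J2 *
        Matrix.fromBlocks A B C D = Matrix.fromBlocks J2 0 0 J2 := by
  by_cases h : A 0 0 * A 1 1 - A 0 1 * A 1 0 = 1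
  · refine ⟨0, 0, 1, ?_⟩
    rw [Matrix.eta_fin_two A]
    ext i j
    rcases i with i | i <;> rcases j with j | j <;> fin_cases i <;> fin_cases j <;>
      simp [Matrix.mul_apply, Fintype.sum_sum_type, Fin.sum_univ_succ, J2, Matrix.one_apply,
        Fin.succ_zero_eq_one] <;>
      linarith [h]
  · have hc1 : (1 : ℝ) - A 0 0 * A 1 1 + A 0 1 * A 1 0 ≠ 0 := by
      intro hx; exact h (by linarith)
    refine ⟨!![1 - (A 0 0 * A 1 1 - A 0 1 * A 1 0), 0; 0, 1],
      !![1 - (A 0 0 * A 1 1 - A 0 1 * A 1 0), 0; 0, 1],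
      !![-(1 - (A 0 0 * A 1 1 - A 0 1 * A 1 0)) * A 1 1, A 0 1;
         A 1 0, -(A 0 0) / (1 - (A 0 0 * A 1 1 - A 0 1 * A 1 0))], ?_⟩
    have hA : A = !![A 0 0, A 0 1; A 1 0, A 1 1] := Matrix.eta_fin_two A
    rw [hA]
    ext i j
    rcases i with i | i <;> rcases j with j | j <;> fin_cases i <;> fin_cases j <;>
      simp [Matrix.mul_apply, Fintype.sum_sum_type, Fin.sum_univ_succ, J2] <;>
      try ring
    all_goals field_simp
    all_goals ring
end

section
/- If A₁ is a 2n₁×2n₁ real matrix admitting a symplectic dilation of order 2(n₁+m₁) and A₂ is a 2n₂×2n₂ real matrix admitting a symplectic dilation of order 2(n₂+m₂), then the direct sum A₁ ⊕ A₂ admits a symplectic dilation of order 2(n₁+m₁+n₂+m₂). -/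
open Matrix

/-- Direct sums of matrices with symplectic dilations admit a symplectic dilation. -/
theorem direct_sum_symplectic_dilation {n₁ m₁ n₂ m₂ : ℕ}
    (A₁ : Matrix (Fin (2*n₁)) (Fin (2*n₁)) ℝ)
    (A₂ : Matrix (Fin (2*n₂)) (Fin (2*n₂)) ℝ)
    (h₁ : ∃ (B : Matrix (Fin (2*n₁)) (Fin (2*m₁)) ℝ)
          (C : Matrix (Fin (2*m₁)) (Fin (2*n₁)) ℝ)
          (D : Matrix (Fin (2*m₁)) (Fin (2*m₁)) ℝ),
        (Matrix.fromBlocks A₁ B C D)ᵀ * Matrix.fromBlocks (J n₁) 0 0 (J m₁) *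
          Matrix.fromBlocks A₁ B C D = Matrix.fromBlocks (J n₁) 0 0 (J m₁))
    (h₂ : ∃ (B : Matrix (Fin (2*n₂)) (Fin (2*m₂)) ℝ)
          (C : Matrix (Fin (2*m₂)) (Fin (2*n₂)) ℝ)
          (D : Matrix (Fin (2*m₂)) (Fin (2*m₂)) ℝ),
        (Matrix.fromBlocks A₂ B C D)ᵀ * Matrix.fromBlocks (J n₂) 0 0 (J m₂) *
          Matrix.fromBlocks A₂ B C D = Matrix.fromBlocks (J n₂) 0 0 (J m₂)) :
    ∃ (B : Matrix (Fin (2*n₁) ⊕ Fin (2*n₂)) (Fin (2*m₁) ⊕ Fin (2*m₂)) ℝ)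
      (C : Matrix (Fin (2*m₁) ⊕ Fin (2*m₂)) (Fin (2*n₁) ⊕ Fin (2*n₂)) ℝ)
      (D : Matrix (Fin (2*m₁) ⊕ Fin (2*m₂)) (Fin (2*m₁) ⊕ Fin (2*m₂)) ℝ),
        (Matrix.fromBlocks (Matrix.fromBlocks A₁ 0 0 A₂) B C D)ᵀ *
          Matrix.fromBlocks (Matrix.fromBlocks (J n₁) 0 0 (J n₂)) 0 0
            (Matrix.fromBlocks (J m₁) 0 0 (J m₂)) *
          Matrix.fromBlocks (Matrix.fromBlocks A₁ 0 0 A₂) B C D =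
        Matrix.fromBlocks (Matrix.fromBlocks (J n₁) 0 0 (J n₂)) 0 0
          (Matrix.fromBlocks (J m₁) 0 0 (J m₂)) := by
  obtain ⟨B₁, C₁, D₁, h₁⟩ := h₁
  obtain ⟨B₂, C₂, D₂, h₂⟩ := h₂
  rw [Matrix.fromBlocks_transpose, Matrix.fromBlocks_multiply, Matrix.fromBlocks_multiply,
    Matrix.fromBlocks_inj] at h₁ h₂
  refine ⟨Matrix.fromBlocks B₁ 0 0 B₂, Matrix.fromBlocks C₁ 0 0 C₂,
    Matrix.fromBlocks D₁ 0 0 D₂, ?_⟩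
  rw [Matrix.fromBlocks_transpose, Matrix.fromBlocks_transpose, Matrix.fromBlocks_transpose,
    Matrix.fromBlocks_transpose, Matrix.fromBlocks_transpose]
  simp only [Matrix.mul_zero, add_zero, zero_add] at h₁ h₂
  simp only [Matrix.fromBlocks_multiply, Matrix.transpose_zero, Matrix.mul_zero,
    Matrix.zero_mul, add_zero, zero_add, Matrix.fromBlocks_add,
    ← Matrix.fromBlocks_zero (α := ℝ), Matrix.fromBlocks_inj]
  exact ⟨⟨h₁.1, trivial, trivial, h₂.1⟩, ⟨h₁.2.1, trivial, trivial, h₂.2.1⟩,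
    ⟨h₁.2.2.1, trivial, trivial, h₂.2.2.1⟩, h₁.2.2.2, trivial, trivial, h₂.2.2.2⟩
end

section
/- Let A₁,...,A_k be 2n×2n real matrices each admitting a symplectic dilation of order 2(n+m), and let p₁,...,p_k be positive reals summing to 1. Then the convex combination Σᵢ pᵢ Aᵢ admits a symplectic dilation of order 2k(n+m). -/
open Matrix

/-!
Choose an orthogonal `k × k` matrix `U` whose column `c₀` is `(√p_c)_c`. Conjugating the
block-diagonal matrix `diag(L_1, …, L_k)` of the given dilations by `1 ⊗ U` yields a matrix that
preserves `J' ⊗ 1` (with `J' = J_n ⊕ J_m`) and whose `(·, c₀), (·, c₀)` block is `∑ p_c L_c`, so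
its top-left `2n × 2n` corner is `∑ p_c A_c`. Up to a permutation of indices that fixes this
corner, `J' ⊗ 1` is `J_n ⊕ J_{k(n+m)-n}`: both are direct sums of copies of `J₂`.
-/

open Kronecker

namespace Matrix

variable {R α β κ : Type*} [CommRing R] [Fintype α] [Fintype κ] [DecidableEq κ]

def PreservesForm (Ω L : Matrix α α R) : Prop := Lᵀ * Ω * L = Ω

theorem PreservesForm.mul {Ω L M : Matrix α α R} (hL : PreservesForm Ω L)
    (hM : PreservesForm Ω M) : PreservesForm Ω (L * M) := by
  unfold PreservesForm at *
  calc (L * M)ᵀ * Ω * (L * M) = Mᵀ * (Lᵀ * Ω * L) * M := by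
        simp only [transpose_mul, Matrix.mul_assoc]
    _ = Ω := by rw [hL, hM]

theorem PreservesForm.submatrix [Fintype β] {Ω L : Matrix α α R} (h : PreservesForm Ω L)
    (e : β ≃ α) : PreservesForm (Ω.submatrix e e) (L.submatrix e e) := by
  unfold PreservesForm at *
  rw [transpose_submatrix, submatrix_mul_equiv, submatrix_mul_equiv, h]

theorem PreservesForm.blockDiagonal [DecidableEq α] {Ω : Matrix α α R} {L : κ → Matrix α α R}
    (h : ∀ c, PreservesForm Ω (L c)) :
    PreservesForm (Ω ⊗ₖ (1 : Matrix κ κ R)) (blockDiagonal L) := by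
  unfold PreservesForm at *
  rw [kronecker_one, blockDiagonal_transpose, ← blockDiagonal_mul, ← blockDiagonal_mul]
  exact congrArg _ (funext h)

theorem preservesForm_one_kronecker [DecidableEq α] (Ω : Matrix α α R) {U : Matrix κ κ R}
    (hU : Uᵀ * U = 1) : PreservesForm (Ω ⊗ₖ (1 : Matrix κ κ R)) ((1 : Matrix α α R) ⊗ₖ U) := by
  unfold PreservesForm
  rw [← kroneckerMap_transpose, transpose_one, ← mul_kronecker_mul, ← mul_kronecker_mul,
    Matrix.one_mul, Matrix.mul_one, Matrix.mul_one, hU]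

theorem PreservesForm.one_kronecker_transpose_mul_blockDiagonal_mul [DecidableEq α]
    {Ω : Matrix α α R} {L : κ → Matrix α α R} (h : ∀ c, PreservesForm Ω (L c))
    {U : Matrix κ κ R} (hU : U ∈ orthogonalGroup κ R) :
    PreservesForm (Ω ⊗ₖ (1 : Matrix κ κ R))
      (((1 : Matrix α α R) ⊗ₖ Uᵀ) * Matrix.blockDiagonal L * ((1 : Matrix α α R) ⊗ₖ U)) :=
  ((preservesForm_one_kronecker Ω (by simpa using (mem_orthogonalGroup_iff _ _).mp hU)).mul
    (.blockDiagonal h)).mul (preservesForm_one_kronecker Ω ((mem_orthogonalGroup_iff' _ _).mp hU))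

theorem one_kronecker_transpose_mul_blockDiagonal_mul_apply [DecidableEq α]
    (U : Matrix κ κ R) (L : κ → Matrix α α R) (x y : α) (a b : κ) :
    (((1 : Matrix α α R) ⊗ₖ Uᵀ) * blockDiagonal L * ((1 : Matrix α α R) ⊗ₖ U)) (x, a) (y, b) =
      ∑ c, U c a * L c x y * U c b := by
  simp [mul_apply, Fintype.sum_prod_type, blockDiagonal_apply, one_apply, ite_mul, mul_ite]

end Matrix

theorem J2_apply (s t : Fin 2) :
    J2 s t = if s.val = 1 ∧ t.val = 0 then 1 else if s.val = 0 ∧ t.val = 1 then -1 else 0 := by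
  fin_cases s <;> fin_cases t <;> simp [J2]

def symplecticForm (ι : Type*) [DecidableEq ι] : Matrix (ι × Fin 2) (ι × Fin 2) ℝ :=
  (1 : Matrix ι ι ℝ) ⊗ₖ J2

/-- `2 * i + s ↦ (i, s)`. -/
def pairEquiv (q : ℕ) : Fin (2 * q) ≃ Fin q × Fin 2 :=
  (finCongr (Nat.mul_comm 2 q)).trans finProdFinEquiv.symm

theorem J_eq_submatrix_symplecticForm (q : ℕ) :
    J q = (symplecticForm (Fin q)).submatrix (pairEquiv q) (pairEquiv q) := by
  ext i j
  simp only [_root_.J, symplecticForm, pairEquiv, of_apply, submatrix_apply, kroneckerMap_apply,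
    one_apply, J2_apply, Equiv.trans_apply, finProdFinEquiv_symm_apply, finCongr_apply,
    Fin.ext_iff, Fin.coe_divNat, Fin.coe_modNat, Fin.val_cast]
  rcases Nat.mod_two_eq_zero_or_one i with hi | hi <;>
    rcases Nat.mod_two_eq_zero_or_one j with hj | hj <;>
    simp [hi, hj] <;> split_ifs <;> first | rfl | (exfalso; omega) | norm_num

def Equiv.prodRightComm (α β γ : Type*) : (α × β) × γ ≃ (α × γ) × β where
  toFun x := ((x.1.1, x.2), x.1.2)
  invFun x := ((x.1.1, x.2), x.1.2)
  left_inv _ := rfl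
  right_inv _ := rfl

theorem symplecticForm_kronecker_one (ι κ : Type*) [DecidableEq ι] [DecidableEq κ] :
    symplecticForm ι ⊗ₖ (1 : Matrix κ κ ℝ) =
      (symplecticForm (ι × κ)).submatrix (Equiv.prodRightComm ι (Fin 2) κ)
        (Equiv.prodRightComm ι (Fin 2) κ) := by
  ext ⟨⟨i, s⟩, c⟩ ⟨⟨j, t⟩, d⟩
  simp only [symplecticForm, Equiv.prodRightComm, kroneckerMap_apply, one_apply, submatrix_apply,
    Equiv.coe_fn_mk, Prod.mk.injEq, ite_and]
  split_ifs <;> simp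

theorem symplecticForm_submatrix_prodCongr {ι κ : Type*} [DecidableEq ι] [DecidableEq κ]
    (e : ι ≃ κ) :
    (symplecticForm κ).submatrix (e.prodCongr (Equiv.refl _)) (e.prodCongr (Equiv.refl _)) =
      symplecticForm ι := by
  ext ⟨i, s⟩ ⟨j, t⟩
  simp [symplecticForm, one_apply]

def blockPairEquiv (a b : ℕ) : Fin (2 * a) ⊕ Fin (2 * b) ≃ (Fin a ⊕ Fin b) × Fin 2 :=
  ((pairEquiv a).sumCongr (pairEquiv b)).trans (Equiv.sumProdDistrib _ _ _).symm

theorem fromBlocks_J_eq_submatrix_symplecticForm (a b : ℕ) :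
    fromBlocks (J a) 0 0 (J b) =
      (symplecticForm (Fin a ⊕ Fin b)).submatrix (blockPairEquiv a b) (blockPairEquiv a b) := by
  rw [J_eq_submatrix_symplecticForm, J_eq_submatrix_symplecticForm]
  ext (i | i) (j | j) <;> simp [blockPairEquiv, symplecticForm, one_apply]

theorem Function.Embedding.exists_equiv_sum_fin {α β : Type*} [Fintype α] [Fintype β]
    (f : β ↪ α) {N : ℕ} (h : Fintype.card α = Fintype.card β + N) :
    ∃ φ : α ≃ β ⊕ Fin N, ∀ b, φ (f b) = Sum.inl b := by
  classical
  have hcompl : Fintype.card ((Set.range f)ᶜ : Set α) = N := by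
    rw [Fintype.card_compl_set, Set.card_range_of_injective f.injective]
    omega
  refine ⟨(Equiv.Set.sumCompl (Set.range f)).symm.trans
    ((Equiv.ofInjective f f.injective).symm.sumCongr (Fintype.equivFinOfCardEq hcompl)), ?_⟩
  intro b
  simp [Equiv.Set.sumCompl_symm_apply_of_mem (Set.mem_range_self b)]

theorem exists_equiv_fromBlocks_J_kronecker_one {n m k N : ℕ} (c₀ : Fin k)
    (h : (n + m) * k = n + N) :
    ∃ Ψ : Fin (2 * n) ⊕ Fin (2 * N) ≃ (Fin (2 * n) ⊕ Fin (2 * m)) × Fin k,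
      (∀ x, Ψ (Sum.inl x) = (Sum.inl x, c₀)) ∧
      (fromBlocks (J n) 0 0 (J m) ⊗ₖ (1 : Matrix (Fin k) (Fin k) ℝ)).submatrix Ψ Ψ =
        fromBlocks (J n) 0 0 (J N) := by
  obtain ⟨φ, hφ⟩ : ∃ φ : (Fin n ⊕ Fin m) × Fin k ≃ Fin n ⊕ Fin N,
      ∀ i, φ (Sum.inl i, c₀) = Sum.inl i :=
    Function.Embedding.exists_equiv_sum_fin
      ⟨fun i => (Sum.inl i, c₀), fun i j hij => by simpa using hij⟩ (by simpa using h)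
  let Q : (Fin (2 * n) ⊕ Fin (2 * m)) × Fin k ≃ (Fin n ⊕ Fin N) × Fin 2 :=
    ((blockPairEquiv n m).prodCongr (Equiv.refl _)).trans
      ((Equiv.prodRightComm _ _ _).trans (φ.prodCongr (Equiv.refl _)))
  refine ⟨(blockPairEquiv n N).trans Q.symm, fun x => ?_, ?_⟩
  · rw [Equiv.trans_apply, Equiv.symm_apply_eq]
    simp [Q, blockPairEquiv, Equiv.prodRightComm, hφ]
  · rw [fromBlocks_J_eq_submatrix_symplecticForm, fromBlocks_J_eq_submatrix_symplecticForm,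
      kroneckerMap_submatrix_left, symplecticForm_kronecker_one,
      ← symplecticForm_submatrix_prodCongr φ]
    simp only [submatrix_submatrix]
    have hQ (u) : Q (((blockPairEquiv n N).trans Q.symm) u) = blockPairEquiv n N u := by simp
    congr 1 <;> exact funext hQ

theorem exists_mem_orthogonalGroup_col_eq {ι : Type*} [Fintype ι] [DecidableEq ι] (v : ι → ℝ)
    (hv : ∑ i, v i ^ 2 = 1) (i₀ : ι) :
    ∃ U ∈ orthogonalGroup ι ℝ, ∀ c, U c i₀ = v c := by
  have hunit : Orthonormal ℝ (({i₀} : Set ι).domRestrict fun _ => WithLp.toLp 2 v) := by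
    rw [orthonormal_subsingleton_iff]
    intro
    rw [← pow_eq_one_iff_of_nonneg (norm_nonneg _) two_ne_zero, EuclideanSpace.real_norm_sq_eq]
    simpa using hv
  obtain ⟨b, hb⟩ := hunit.exists_orthonormalBasis_extension_of_card_eq (by simp)
  refine ⟨(EuclideanSpace.basisFun ι ℝ).toBasis.toMatrix b,
    (EuclideanSpace.basisFun ι ℝ).toMatrix_orthonormalBasis_mem_orthogonal b, fun c => ?_⟩
  simp [Module.Basis.toMatrix_apply, hb i₀ rfl]

/-- A convex combination of k matrices each admitting a symplectic dilation of order
2(n+m) admits a symplectic dilation of order 2k(n+m). -/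
theorem convex_combination_symplectic_dilation {n m k : ℕ}
    (A : Fin k → Matrix (Fin (2*n)) (Fin (2*n)) ℝ) (p : Fin k → ℝ)
    (hp : ∀ i, 0 < p i) (hsum : ∑ i, p i = 1)
    (hA : ∀ i, ∃ (B : Matrix (Fin (2*n)) (Fin (2*m)) ℝ)
          (C : Matrix (Fin (2*m)) (Fin (2*n)) ℝ)
          (D : Matrix (Fin (2*m)) (Fin (2*m)) ℝ),
        (Matrix.fromBlocks (A i) B C D)ᵀ * Matrix.fromBlocks (J n) 0 0 (J m) *
          Matrix.fromBlocks (A i) B C D = Matrix.fromBlocks (J n) 0 0 (J m)) :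
    ∃ (B : Matrix (Fin (2*n)) (Fin (2*(k*(n+m)-n))) ℝ)
      (C : Matrix (Fin (2*(k*(n+m)-n))) (Fin (2*n)) ℝ)
      (D : Matrix (Fin (2*(k*(n+m)-n))) (Fin (2*(k*(n+m)-n))) ℝ),
        (Matrix.fromBlocks (∑ i, p i • A i) B C D)ᵀ *
          Matrix.fromBlocks (J n) 0 0 (J (k*(n+m)-n)) *
          Matrix.fromBlocks (∑ i, p i • A i) B C D =
        Matrix.fromBlocks (J n) 0 0 (J (k*(n+m)-n)) := by
  have hk : 0 < k := Nat.pos_of_ne_zero (by rintro rfl; simp at hsum)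
  choose B C D hL using hA
  obtain ⟨U, hU, hU₀⟩ := exists_mem_orthogonalGroup_col_eq (fun c => √(p c))
    (by simpa [Real.sq_sqrt (hp _).le] using hsum) ⟨0, hk⟩
  obtain ⟨Ψ, hΨ₀, hΨ⟩ := exists_equiv_fromBlocks_J_kronecker_one (n := n) (m := m)
    (N := k * (n + m) - n) ⟨0, hk⟩ (by rw [Nat.add_sub_cancel' (by nlinarith), mul_comm])
  let L c := fromBlocks (A c) (B c) (C c) (D c)
  let S := ((1 ⊗ₖ Uᵀ) * blockDiagonal L * (1 ⊗ₖ U)).submatrix Ψ Ψ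
  have hS : PreservesForm (fromBlocks (J n) 0 0 (J (k * (n + m) - n))) S :=
    hΨ ▸ (PreservesForm.one_kronecker_transpose_mul_blockDiagonal_mul hL hU).submatrix Ψ
  have hcorner : S.toBlocks₁₁ = ∑ c, p c • A c := by
    ext x y
    simp only [S, toBlocks₁₁, of_apply, submatrix_apply, hΨ₀, hU₀, Matrix.sum_apply,
      one_kronecker_transpose_mul_blockDiagonal_mul_apply, Matrix.smul_apply, smul_eq_mul]
    refine Finset.sum_congr rfl fun c _ => ?_
    rw [mul_right_comm, Real.mul_self_sqrt (hp c).le]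
    rfl
  exact ⟨S.toBlocks₁₂, S.toBlocks₂₁, S.toBlocks₂₂, by rw [← hcorner, fromBlocks_toBlocks]; exact hS⟩
end

section
/- Every real strictly positive definite 2n×2n matrix A admits a symplectic dilation of order 4n: there exists a matrix in Sp(4n) whose top-left 2n×2n block equals A. -/
open Matrix

/-!
Since `A` is invertible, pick `C` with `Cᵀ J C = J - Aᵀ J A` (every skew-symmetric matrix is a
Gram matrix of `J`, by the normal form of alternating forms) and `W` with `Aᵀ J W = -Cᵀ J`.
Congruence by `M = [A W; C 1]` takes `J ⊕ J` to `J ⊕ T` with `T = Wᵀ J W + J`; the Schur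
complement `A - W C` satisfies `Aᵀ J (A - W C) = J`, so `M`, hence `T`, is invertible. An
invertible skew-symmetric `T` is congruent to `J`, say `Dᵀ T D = J`, and then
`M (1 ⊕ D) = [A (W D); C D]` is symplectic.
-/

open Sum

lemma transpose_J2 : J2ᵀ = -J2 := by
  ext i j
  fin_cases i <;> fin_cases j <;> simp [J2]

lemma J2_mul_J2 : J2 * J2 = -1 := by
  ext i j
  fin_cases i <;> fin_cases j <;> simp [J2, mul_apply]

def finTwoSumEquiv (n : ℕ) : Fin 2 ⊕ Fin (2 * n) ≃ Fin (2 * (n + 1)) :=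
  finSumFinEquiv.trans (finCongr (by ring))

lemma J_succ (n : ℕ) :
    _root_.J (n + 1) =
      reindex (finTwoSumEquiv n) (finTwoSumEquiv n) (fromBlocks J2 0 0 (_root_.J n)) := by
  ext i j
  obtain ⟨i, rfl⟩ := (finTwoSumEquiv n).surjective i
  obtain ⟨j, rfl⟩ := (finTwoSumEquiv n).surjective j
  rcases i with i | i <;> rcases j with j | j
  · fin_cases i <;> fin_cases j <;> simp [_root_.J, J2, finTwoSumEquiv]
  · simp [_root_.J, finTwoSumEquiv]; split_ifs <;> first | rfl | omega
  · simp [_root_.J, finTwoSumEquiv]; split_ifs <;> first | rfl | omega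
  · simp [_root_.J, finTwoSumEquiv]

lemma transpose_J (n : ℕ) : (_root_.J n)ᵀ = -_root_.J n := by
  ext i j
  rw [transpose_apply, neg_apply]
  simp only [_root_.J, of_apply]
  split_ifs <;> first | (exfalso; omega) | norm_num

lemma J_mul_J : ∀ n, _root_.J n * _root_.J n = -1
  | 0 => by ext i; exact i.elim0
  | n + 1 => by
    have h : (fromBlocks (-1) 0 0 (-1) : Matrix (Fin 2 ⊕ Fin (2 * n)) (Fin 2 ⊕ Fin (2 * n)) ℝ) =
        -1 := by
      simp only [← fromBlocks_one, fromBlocks_neg, neg_zero]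
    simp [J_succ, fromBlocks_multiply, J2_mul_J2, J_mul_J n, h, submatrix_neg,
      submatrix_one_equiv]

section Skew

variable {α R : Type*} [AddGroup R]

lemma skew_apply_self [IsAddTorsionFree R] {S : Matrix α α R} (hS : Sᵀ = -S) (i : α) :
    S i i = 0 :=
  self_eq_neg.mp (congr_fun₂ hS i i)

lemma exists_equiv_apply_ne_zero [IsAddTorsionFree R] {β : Type*} [Finite β]
    {S : Matrix α α R} (hS : Sᵀ = -S) (hS0 : S ≠ 0) (e : β ≃ α) {a b : β}
    (hab : a ≠ b) :
    ∃ σ : β ≃ α, S (σ a) (σ b) ≠ 0 := by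
  obtain ⟨i, j, hij⟩ : ∃ i j, S i j ≠ 0 := by
    contrapose! hS0
    ext i j
    exact hS0 i j
  have hne : i ≠ j := by
    rintro rfl
    exact hij (skew_apply_self hS i)
  obtain ⟨τ, hτ⟩ := Equiv.Perm.exists_extending_pair ![e a, e b] ![i, j]
    (by intro x y; fin_cases x <;> fin_cases y <;> simp [hab, hab.symm])
    (by intro x y; fin_cases x <;> fin_cases y <;> simp [hne, hne.symm])
  have ha : τ (e a) = i := hτ 0
  have hb : τ (e b) = j := hτ 1
  exact ⟨e.trans τ, by simpa [ha, hb] using hij⟩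

variable {l m : Type*} {S : Matrix (l ⊕ m) (l ⊕ m) R}

lemma fromBlocks_toBlocks_of_skew (hS : Sᵀ = -S) :
    fromBlocks S.toBlocks₁₁ S.toBlocks₁₂ (-S.toBlocks₁₂ᵀ) S.toBlocks₂₂ = S := by
  conv_rhs => rw [← fromBlocks_toBlocks S]
  congr 1
  ext i j
  exact (congr_fun₂ hS (inl j) (inr i)).symm

lemma transpose_toBlocks₂₂_of_skew (hS : Sᵀ = -S) : S.toBlocks₂₂ᵀ = -S.toBlocks₂₂ := by
  ext i j
  exact congr_fun₂ hS (inr i) (inr j)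

end Skew

section Elimination

variable {ι : Type*} [Fintype ι] [DecidableEq ι]

lemma unipotent_congr_fromBlocks_J2 (B : Matrix (Fin 2) ι ℝ) (E : Matrix ι ι ℝ) :
    (fromBlocks 1 (J2 * B) 0 1)ᵀ * fromBlocks J2 B (-Bᵀ) E * fromBlocks 1 (J2 * B) 0 1 =
      fromBlocks J2 0 0 (E - Bᵀ * J2 * B) := by
  have h₁ : J2 * (J2 * B) = -B := by
    rw [← Matrix.mul_assoc, J2_mul_J2, Matrix.neg_mul, Matrix.one_mul]
  have h₂ : (J2 * B)ᵀ * J2 = Bᵀ := by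
    rw [transpose_mul, transpose_J2, Matrix.mul_assoc, Matrix.neg_mul, J2_mul_J2]
    simp
  rw [fromBlocks_transpose, fromBlocks_multiply, fromBlocks_multiply]
  simp only [transpose_one, transpose_zero, Matrix.one_mul, Matrix.mul_one, Matrix.zero_mul,
    Matrix.mul_zero, add_zero, zero_add, h₁, h₂, neg_add_cancel, add_neg_cancel]
  rw [transpose_mul, transpose_J2, Matrix.mul_neg, Matrix.neg_mul, neg_add_eq_sub]

lemma exists_congr_eq_fromBlocks_J2 {S : Matrix (Fin 2 ⊕ ι) (Fin 2 ⊕ ι) ℝ}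
    (hS : Sᵀ = -S) (h : S (inl 1) (inl 0) ≠ 0) :
    ∃ P : Matrix (Fin 2 ⊕ ι) (Fin 2 ⊕ ι) ℝ, IsUnit P.det ∧
      ∃ S' : Matrix ι ι ℝ, S'ᵀ = -S' ∧ Pᵀ * S * P = fromBlocks J2 0 0 S' := by
  set D : Matrix (Fin 2 ⊕ ι) (Fin 2 ⊕ ι) ℝ :=
    diagonal (Sum.elim ![1, (S (inl 1) (inl 0))⁻¹] 1)
  set S₁ := Dᵀ * S * D
  have hS₁_skew : S₁ᵀ = -S₁ := by
    simp only [S₁, transpose_mul, transpose_transpose, hS, Matrix.mul_neg, Matrix.neg_mul,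
      Matrix.mul_assoc]
  have h01 : S (inl 0) (inl 1) = -S (inl 1) (inl 0) := congr_fun₂ hS (inl 1) (inl 0)
  have h₁₁ : S₁.toBlocks₁₁ = J2 := by
    ext i j
    fin_cases i <;> fin_cases j <;>
      simp [S₁, D, J2, toBlocks₁₁, skew_apply_self hS, h, h01]
  set B := S₁.toBlocks₁₂
  set E := S₁.toBlocks₂₂
  have hS₁_blocks : S₁ = fromBlocks J2 B (-Bᵀ) E := by
    rw [← h₁₁]
    exact (fromBlocks_toBlocks_of_skew hS₁_skew).symm
  set P := fromBlocks (1 : Matrix (Fin 2) (Fin 2) ℝ) (J2 * B) 0 (1 : Matrix ι ι ℝ)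
  refine ⟨D * P, ?_, E - Bᵀ * J2 * B, ?_, ?_⟩
  · rw [isUnit_iff_ne_zero]
    simp [D, P, Fintype.prod_sum_type, h]
  · rw [transpose_sub, transpose_toBlocks₂₂_of_skew hS₁_skew]
    simp [transpose_mul, transpose_J2, Matrix.mul_assoc]
    abel
  · rw [transpose_mul, show Pᵀ * Dᵀ * S * (D * P) = Pᵀ * S₁ * P by
      simp only [S₁, Matrix.mul_assoc], hS₁_blocks, unipotent_congr_fromBlocks_J2]

end Elimination

section Represents

variable {m n p R : Type*} [Fintype m] [CommRing R]

lemma inv_transpose_mul_congr_mul_inv [Fintype n] [DecidableEq n] {P : Matrix n n R}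
    (hP : IsUnit P.det) (X : Matrix n n R) : (P⁻¹)ᵀ * (Pᵀ * X * P) * P⁻¹ = X := by
  rw [show (P⁻¹)ᵀ * (Pᵀ * X * P) * P⁻¹ = (P * P⁻¹)ᵀ * X * (P * P⁻¹) by
    simp only [transpose_mul, Matrix.mul_assoc], mul_nonsing_inv _ hP]
  simp

def Represents (Ω : Matrix m m R) (S : Matrix n n R) : Prop :=
  ∃ C : Matrix m n R, Cᵀ * Ω * C = S

namespace Represents

variable {Ω : Matrix m m R} {S : Matrix n n R}

lemma zero : Represents Ω (0 : Matrix n n R) := ⟨0, by simp⟩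

lemma self [DecidableEq m] (Ω : Matrix m m R) : Represents Ω Ω := ⟨1, by simp⟩

lemma congr [Fintype n] [Fintype p] (h : Represents Ω S) (P : Matrix n p R) :
    Represents Ω (Pᵀ * S * P) := by
  obtain ⟨C, rfl⟩ := h
  exact ⟨C * P, by simp only [transpose_mul, Matrix.mul_assoc]⟩

lemma of_congr [Fintype n] [DecidableEq n] {P : Matrix n n R} (hP : IsUnit P.det)
    (h : Represents Ω (Pᵀ * S * P)) : Represents Ω S := by
  simpa only [inv_transpose_mul_congr_mul_inv hP] using h.congr P⁻¹

lemma submatrix (h : Represents Ω S) (e : p ≃ n) : Represents Ω (S.submatrix e e) := by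
  obtain ⟨C, rfl⟩ := h
  exact ⟨C.submatrix id e, rfl⟩

lemma submatrix_form [Fintype p] (h : Represents Ω S) (e : p ≃ m) :
    Represents (Ω.submatrix e e) S := by
  obtain ⟨C, rfl⟩ := h
  exact ⟨C.submatrix e id, by simp [transpose_submatrix]⟩

lemma fromBlocks {m' n' : Type*} [Fintype m'] {Ω' : Matrix m' m' R} {S' : Matrix n' n' R}
    (h : Represents Ω S) (h' : Represents Ω' S') :
    Represents (fromBlocks Ω 0 0 Ω') (fromBlocks S 0 0 S') := by
  obtain ⟨C, rfl⟩ := h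
  obtain ⟨C', rfl⟩ := h'
  exact ⟨fromBlocks C 0 0 C', by simp [fromBlocks_transpose, fromBlocks_multiply]⟩

lemma exists_congr_eq [DecidableEq m] {S : Matrix m m R} (h : Represents Ω S)
    (hS : IsUnit S.det) : ∃ D : Matrix m m R, Dᵀ * S * D = Ω := by
  obtain ⟨C, rfl⟩ := h
  have hC : IsUnit C.det := by
    rw [det_mul, det_mul] at hS
    exact isUnit_of_mul_isUnit_right hS
  exact ⟨C⁻¹, inv_transpose_mul_congr_mul_inv hC Ω⟩

end Represents

end Represents

lemma represents_J_of_skew :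
    ∀ {n : ℕ} {S : Matrix (Fin (2 * n)) (Fin (2 * n)) ℝ}, Sᵀ = -S →
      Represents (_root_.J n) S
  | 0, _, _ => ⟨0, by ext i; exact i.elim0⟩
  | n + 1, S, hS => by
    by_cases hS0 : S = 0
    · rw [hS0]
      exact .zero
    obtain ⟨σ, hσ⟩ := exists_equiv_apply_ne_zero hS hS0 (finTwoSumEquiv n)
      (a := inl 1) (b := inl 0) (by simp)
    have hSσ : (S.submatrix σ σ)ᵀ = -S.submatrix σ σ := by
      rw [transpose_submatrix, hS]
      rfl
    obtain ⟨P, hP, S', hS', hPS⟩ := exists_congr_eq_fromBlocks_J2 hSσ hσ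
    have hrep : Represents (_root_.J (n + 1)) (Pᵀ * S.submatrix σ σ * P) := by
      rw [hPS, J_succ, reindex_apply]
      exact ((Represents.self J2).fromBlocks (represents_J_of_skew hS')).submatrix_form _
    simpa using (hrep.of_congr hP).submatrix σ.symm

section Completion

variable {m R : Type*} [Fintype m] [DecidableEq m] [CommRing R] {Ω A W C : Matrix m m R}

lemma exists_transpose_mul_mul_eq_neg (hΩ : Ω * Ω = -1) (hA : IsUnit A.det)
    (C : Matrix m m R) : ∃ W, Aᵀ * Ω * W = -(Cᵀ * Ω) := by
  have hAt : IsUnit Aᵀ.det := by rwa [det_transpose]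
  refine ⟨Ω * (Aᵀ)⁻¹ * Cᵀ * Ω, ?_⟩
  simp only [← Matrix.mul_assoc, Matrix.mul_assoc Aᵀ Ω Ω, hΩ, Matrix.mul_neg,
    Matrix.mul_one, Matrix.neg_mul, mul_nonsing_inv _ hAt, Matrix.one_mul]

lemma fromBlocks_congr_eq (hΩt : Ωᵀ = -Ω) (hC : Cᵀ * Ω * C = Ω - Aᵀ * Ω * A)
    (hW : Aᵀ * Ω * W = -(Cᵀ * Ω)) :
    (fromBlocks A W C 1)ᵀ * fromBlocks Ω 0 0 Ω * fromBlocks A W C 1 =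
      fromBlocks Ω 0 0 (Wᵀ * Ω * W + Ω) := by
  have hW' : Wᵀ * Ω * A = -(Ω * C) := by
    rw [← neg_eq_iff_eq_neg]
    simpa [transpose_mul, hΩt, Matrix.mul_assoc] using congr_arg transpose hW
  simp only [fromBlocks_transpose, fromBlocks_multiply, transpose_one, Matrix.mul_zero,
    add_zero, zero_add, Matrix.mul_one, Matrix.one_mul]
  congr 1
  · rw [hC]; abel
  · rw [hW]; abel
  · rw [hW']; abel

lemma isUnit_det_fromBlocks_one₂₂ (hΩ : IsUnit Ω.det) (hC : Cᵀ * Ω * C = Ω - Aᵀ * Ω * A)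
    (hW : Aᵀ * Ω * W = -(Cᵀ * Ω)) : IsUnit (fromBlocks A W C 1).det := by
  have hSchur : Aᵀ * Ω * (A - W * C) = Ω := by
    rw [Matrix.mul_sub, ← Matrix.mul_assoc, hW, Matrix.neg_mul, hC]
    abel
  rw [det_fromBlocks_one₂₂]
  apply isUnit_of_mul_isUnit_right (x := (Aᵀ * Ω).det)
  rwa [← det_mul, hSchur]

lemma isUnit_det_transpose_mul_mul_add (hΩt : Ωᵀ = -Ω) (hΩ : IsUnit Ω.det)
    (hC : Cᵀ * Ω * C = Ω - Aᵀ * Ω * A) (hW : Aᵀ * Ω * W = -(Cᵀ * Ω)) :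
    IsUnit (Wᵀ * Ω * W + Ω).det := by
  have h := congr_arg det (fromBlocks_congr_eq hΩt hC hW)
  rw [det_mul, det_mul, det_transpose, det_fromBlocks_zero₂₁, det_fromBlocks_zero₂₁] at h
  have hM := isUnit_det_fromBlocks_one₂₂ hΩ hC hW
  exact isUnit_of_mul_isUnit_right (h ▸ (hM.mul (hΩ.mul hΩ)).mul hM)

lemma fromBlocks_congr_eq_of_congr {D : Matrix m m R} (hΩt : Ωᵀ = -Ω)
    (hC : Cᵀ * Ω * C = Ω - Aᵀ * Ω * A) (hW : Aᵀ * Ω * W = -(Cᵀ * Ω))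
    (hD : Dᵀ * (Wᵀ * Ω * W + Ω) * D = Ω) :
    (fromBlocks A (W * D) C D)ᵀ * fromBlocks Ω 0 0 Ω * fromBlocks A (W * D) C D =
      fromBlocks Ω 0 0 Ω := by
  have hfac : fromBlocks A (W * D) C D = fromBlocks A W C 1 * fromBlocks 1 0 0 D := by
    simp [fromBlocks_multiply]
  rw [hfac, transpose_mul]
  calc _ = (fromBlocks 1 0 0 D)ᵀ * ((fromBlocks A W C 1)ᵀ * fromBlocks Ω 0 0 Ω *
        fromBlocks A W C 1) * fromBlocks 1 0 0 D := by simp only [Matrix.mul_assoc]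
    _ = _ := by
      rw [fromBlocks_congr_eq hΩt hC hW]
      simp [fromBlocks_transpose, fromBlocks_multiply, hD]

end Completion

/-- Every strictly positive definite 2n×2n real matrix admits a symplectic dilation
of order 4n. -/
theorem posdef_symplectic_dilation {n : ℕ}
    (A : Matrix (Fin (2*n)) (Fin (2*n)) ℝ) (hA : A.PosDef) :
    ∃ (B C D : Matrix (Fin (2*n)) (Fin (2*n)) ℝ),
      (Matrix.fromBlocks A B C D)ᵀ * Matrix.fromBlocks (J n) 0 0 (J n) *
        Matrix.fromBlocks A B C D = Matrix.fromBlocks (J n) 0 0 (J n) := by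
  have hJ : IsUnit (_root_.J n).det :=
    isUnit_det_of_right_inverse (B := -_root_.J n) (by rw [Matrix.mul_neg, J_mul_J, neg_neg])
  obtain ⟨C, hC⟩ := represents_J_of_skew (S := _root_.J n - Aᵀ * _root_.J n * A) (by
    simp [transpose_mul, transpose_J, Matrix.mul_assoc]; abel)
  obtain ⟨W, hW⟩ := exists_transpose_mul_mul_eq_neg (J_mul_J n)
    ((isUnit_iff_isUnit_det A).mp hA.isUnit) C
  obtain ⟨D, hD⟩ := (represents_J_of_skew (S := Wᵀ * _root_.J n * W + _root_.J n) (by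
    simp [transpose_mul, transpose_J, Matrix.mul_assoc]; abel)).exists_congr_eq
    (isUnit_det_transpose_mul_mul_add (transpose_J n) hJ hC hW)
  exact ⟨W * D, C, D, fromBlocks_congr_eq_of_congr (transpose_J n) hC hW hD⟩
end

section
/- Every real symmetric 2n×2n matrix admits a symplectic dilation of order 8n. -/
open Matrix

/-- The alternating sign diagonal matrix diag(1,-1,1,-1,...). -/
def Kd (n : ℕ) : Matrix (Fin (2*n)) (Fin (2*n)) ℝ :=
  Matrix.diagonal fun i => if i.val % 2 = 0 then 1 else -1

lemma JT (n : ℕ) : (J n)ᵀ = -(J n) := by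
  ext i j
  simp only [transpose_apply, _root_.J, of_apply, Matrix.neg_apply]
  split_ifs <;> first | ring1 | (exfalso; omega)

lemma KT (n : ℕ) : (Kd n)ᵀ = Kd n := Matrix.diagonal_transpose _

lemma K2 (n : ℕ) : Kd n * Kd n = 1 := by
  rw [Kd, Matrix.diagonal_mul_diagonal]
  ext i j
  rw [Matrix.diagonal_apply, Matrix.one_apply]
  split_ifs <;> norm_num

lemma KJ (n : ℕ) : Kd n * J n = -(J n * Kd n) := by
  ext i j
  simp only [Kd, _root_.J, Matrix.diagonal_mul, Matrix.mul_diagonal, Matrix.neg_apply, of_apply]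
  split_ifs <;> first | ring1 | (exfalso; omega)

lemma JJ2 (n : ℕ) : J n * J n = -1 := by
  ext i j
  rw [Matrix.mul_apply]
  have hi := i.isLt
  have hj := j.isLt
  by_cases hpar : i.val % 2 = 0
  · rw [Finset.sum_eq_single_of_mem ⟨i.val + 1, by omega⟩ (Finset.mem_univ _)]
    · simp only [_root_.J, of_apply, Matrix.neg_apply, Matrix.one_apply, Fin.ext_iff, true_and,
        and_true]
      split_ifs <;> first | ring1 | (exfalso; omega)
    · intro b _ hb
      have hbv : ¬ b.val = i.val + 1 := fun h => hb (Fin.ext h)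
      simp only [_root_.J, of_apply]
      split_ifs <;> first | ring1 | (exfalso; omega)
  · rw [Finset.sum_eq_single_of_mem ⟨i.val - 1, by omega⟩ (Finset.mem_univ _)]
    · simp only [_root_.J, of_apply, Matrix.neg_apply, Matrix.one_apply, Fin.ext_iff, true_and,
        and_true]
      split_ifs <;> first | ring1 | (exfalso; omega)
    · intro b _ hb
      have hbv : ¬ b.val = i.val - 1 := fun h => hb (Fin.ext h)
      simp only [_root_.J, of_apply]
      split_ifs <;> first | ring1 | (exfalso; omega)

section Core

variable (n : ℕ) (A : Matrix (Fin (2*n)) (Fin (2*n)) ℝ)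

/-- Top-left 2x2-block part of the dilation. -/
noncomputable def P0 : Matrix (Fin (2*n) ⊕ Fin (2*n)) (Fin (2*n) ⊕ Fin (2*n)) ℝ :=
  fromBlocks A (A * Kd n) (Kd n * A) (Kd n * A * Kd n)

/-- Bottom-right 2x2-block part of the dilation. -/
noncomputable def S0 : Matrix (Fin (2*n) ⊕ Fin (2*n)) (Fin (2*n) ⊕ Fin (2*n)) ℝ :=
  fromBlocks (J n * A * J n) (-(J n * A * J n * Kd n)) (J n * Kd n * A * J n)
    (J n * Kd n * A * Kd n * J n)

/-- The 2-fold symplectic form. -/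
noncomputable def W0 : Matrix (Fin (2*n) ⊕ Fin (2*n)) (Fin (2*n) ⊕ Fin (2*n)) ℝ :=
  fromBlocks (J n) 0 0 (J n)

theorem core (hA : Aᵀ = A) :
    (fromBlocks (P0 n A) 1 1 (S0 n A))ᵀ * fromBlocks (W0 n) 0 0 (W0 n) *
      fromBlocks (P0 n A) 1 1 (S0 n A) = fromBlocks (W0 n) 0 0 (W0 n) := by
  have hj2 : ∀ X : Matrix (Fin (2*n)) (Fin (2*n)) ℝ, J n * (J n * X) = -X := by
    intro X; rw [← mul_assoc, JJ2, neg_one_mul]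
  have hkjk : ∀ X : Matrix (Fin (2*n)) (Fin (2*n)) ℝ,
      Kd n * (J n * (Kd n * X)) = -(J n * X) := by
    intro X
    calc Kd n * (J n * (Kd n * X)) = (Kd n * J n) * (Kd n * X) := by rw [mul_assoc]
      _ = -(J n * Kd n) * (Kd n * X) := by rw [KJ]
      _ = -(J n * (Kd n * (Kd n * X))) := by rw [neg_mul, mul_assoc]
      _ = -(J n * X) := by rw [← mul_assoc (Kd n), K2, one_mul]
  have hkj : ∀ X : Matrix (Fin (2*n)) (Fin (2*n)) ℝ,
      Kd n * (J n * X) = -(J n * (Kd n * X)) := by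
    intro X; rw [← mul_assoc, KJ, neg_mul, mul_assoc]
  rw [P0, S0, W0]
  simp only [fromBlocks_transpose, fromBlocks_multiply, fromBlocks_add, transpose_mul,
    transpose_one, transpose_zero, transpose_neg, hA, JT, KT, neg_neg,
    Matrix.mul_zero, Matrix.zero_mul, Matrix.mul_one, Matrix.one_mul, add_zero, zero_add,
    Matrix.neg_mul, Matrix.mul_neg, neg_zero, mul_assoc]
  simp only [hkjk, hj2, hkj, KJ, JJ2, mul_neg, mul_neg_one, mul_one, neg_neg,
    add_neg_cancel, neg_add_cancel, add_neg_cancel_left, neg_add_cancel_left, add_zero,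
    zero_add, neg_zero, fromBlocks_zero]

end Core

/-- Splitting `Fin (2*(a+b))` as a sum. -/
def e2 (a b : ℕ) : Fin (2*(a+b)) ≃ Fin (2*a) ⊕ Fin (2*b) :=
  (finCongr (by ring)).trans finSumFinEquiv.symm

lemma e2_symm_inl (a b : ℕ) (i : Fin (2*a)) : ((e2 a b).symm (Sum.inl i)).val = i.val := by
  simp [e2]

lemma e2_symm_inr (a b : ℕ) (i : Fin (2*b)) :
    ((e2 a b).symm (Sum.inr i)).val = 2*a + i.val := by
  simp [e2]

lemma J_split (a b : ℕ) :
    J (a+b) = (fromBlocks (J a) 0 0 (J b)).submatrix (e2 a b) (e2 a b) := by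
  have key : ∀ x y, (fromBlocks (J a) 0 0 (J b)) x y
      = J (a+b) ((e2 a b).symm x) ((e2 a b).symm y) := by
    have h1 := e2_symm_inl a b
    have h2 := e2_symm_inr a b
    rintro (x | x) (y | y) <;>
      simp only [fromBlocks_apply₁₁, fromBlocks_apply₁₂, fromBlocks_apply₂₁, fromBlocks_apply₂₂,
        _root_.J, of_apply, Matrix.zero_apply, h1, h2] <;>
      split_ifs <;> first | rfl | (exfalso; omega)
  ext i j
  have h := key (e2 a b i) (e2 a b j)
  simp only [Equiv.symm_apply_apply] at h
  rw [Matrix.submatrix_apply, ← h]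

lemma J_cast {a b : ℕ} (h : a = b) :
    J b = (J a).submatrix (finCongr (by rw [h])) (finCongr (by rw [h])) := by
  subst h
  ext i j
  simp [finCongr]

/-- Every symmetric 2n×2n real matrix admits a symplectic dilation of order 8n. -/
theorem symmetric_symplectic_dilation {n : ℕ}
    (A : Matrix (Fin (2*n)) (Fin (2*n)) ℝ) (hA : Aᵀ = A) :
    ∃ (B : Matrix (Fin (2*n)) (Fin (2*(3*n))) ℝ)
      (C : Matrix (Fin (2*(3*n))) (Fin (2*n)) ℝ)
      (D : Matrix (Fin (2*(3*n))) (Fin (2*(3*n))) ℝ),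
      (Matrix.fromBlocks A B C D)ᵀ * Matrix.fromBlocks (J n) 0 0 (J (3*n)) *
        Matrix.fromBlocks A B C D = Matrix.fromBlocks (J n) 0 0 (J (3*n)) := by
  classical
  have h33 : 2*(3*n) = 2*(n+(n+n)) := by ring
  have h33' : n+(n+n) = 3*n := by ring
  let e6 : Fin (2*(3*n)) ≃ Fin (2*n) ⊕ (Fin (2*n) ⊕ Fin (2*n)) :=
    (finCongr h33).trans ((e2 n (n+n)).trans ((Equiv.refl (Fin (2*n))).sumCongr (e2 n n)))
  let ρ : (Fin (2*n) ⊕ (Fin (2*n) ⊕ (Fin (2*n) ⊕ Fin (2*n)))) ≃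
      ((Fin (2*n) ⊕ Fin (2*n)) ⊕ (Fin (2*n) ⊕ Fin (2*n))) :=
    (Equiv.sumAssoc (Fin (2*n)) (Fin (2*n)) (Fin (2*n) ⊕ Fin (2*n))).symm
  let σ : (Fin (2*n) ⊕ Fin (2*(3*n))) ≃ ((Fin (2*n) ⊕ Fin (2*n)) ⊕ (Fin (2*n) ⊕ Fin (2*n))) :=
    ((Equiv.refl (Fin (2*n))).sumCongr e6).trans ρ
  let Mb := fromBlocks (P0 n A) 1 1 (S0 n A)
  let Wb := fromBlocks (W0 n) 0 0 (W0 n)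
  refine ⟨Mb.submatrix (fun i => Sum.inl (Sum.inl i)) (fun j => σ (Sum.inr j)),
    Mb.submatrix (fun i => σ (Sum.inr i)) (fun j => Sum.inl (Sum.inl j)),
    Mb.submatrix (fun i => σ (Sum.inr i)) (fun j => σ (Sum.inr j)), ?_⟩
  -- the dilation as a reindexed block matrix
  have hMglue : fromBlocks A
      (Mb.submatrix (fun i => Sum.inl (Sum.inl i)) (fun j => σ (Sum.inr j)))
      (Mb.submatrix (fun i => σ (Sum.inr i)) (fun j => Sum.inl (Sum.inl j)))
      (Mb.submatrix (fun i => σ (Sum.inr i)) (fun j => σ (Sum.inr j)))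
      = Mb.submatrix σ σ := by
    ext (i | i) (j | j) <;>
      simp [σ, ρ, Mb, P0, Equiv.sumAssoc, Matrix.submatrix_apply]
  -- the inner 3-fold block form equals _root_.J (3*n) after reindexing
  have hJ3 : (fromBlocks (_root_.J n) 0 0 (fromBlocks (_root_.J n) 0 0 (_root_.J n))).submatrix e6 e6 = _root_.J (3*n) := by
    have step1 : (fromBlocks (_root_.J n) 0 0 (fromBlocks (_root_.J n) 0 0 (_root_.J n))).submatrix
        ((Equiv.refl (Fin (2*n))).sumCongr (e2 n n)) ((Equiv.refl (Fin (2*n))).sumCongr (e2 n n))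
        = fromBlocks (_root_.J n) 0 0 ((fromBlocks (_root_.J n) 0 0 (_root_.J n)).submatrix (e2 n n) (e2 n n)) := by
      ext (i | i) (j | j) <;> simp
    show (fromBlocks (_root_.J n) 0 0 (fromBlocks (_root_.J n) 0 0 (_root_.J n))).submatrix
        ⇑((finCongr h33).trans ((e2 n (n+n)).trans ((Equiv.refl (Fin (2*n))).sumCongr (e2 n n))))
        ⇑((finCongr h33).trans ((e2 n (n+n)).trans ((Equiv.refl (Fin (2*n))).sumCongr (e2 n n))))
        = _root_.J (3*n)
    simp only [Equiv.coe_trans, ← Matrix.submatrix_submatrix]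
    rw [step1, ← J_split n n, ← J_split n (n+n), ← J_cast h33']
  -- the symplectic form equals the reindexed 4-fold block form
  have hWglue : Wb.submatrix σ σ = fromBlocks (_root_.J n) 0 0 (_root_.J (3*n)) := by
    have stepA : Wb.submatrix ρ ρ
        = fromBlocks (_root_.J n) 0 0 (fromBlocks (_root_.J n) 0 0 (fromBlocks (_root_.J n) 0 0 (_root_.J n))) := by
      ext (i | i | i) (j | j | j) <;>
        simp [ρ, Wb, W0, Equiv.sumAssoc, Matrix.submatrix_apply, fromBlocks]
    have stepB : (fromBlocks (_root_.J n) 0 0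
          (fromBlocks (_root_.J n) 0 0 (fromBlocks (_root_.J n) 0 0 (_root_.J n)))).submatrix
        ((Equiv.refl (Fin (2*n))).sumCongr e6) ((Equiv.refl (Fin (2*n))).sumCongr e6)
        = fromBlocks (_root_.J n) 0 0
          ((fromBlocks (_root_.J n) 0 0 (fromBlocks (_root_.J n) 0 0 (_root_.J n))).submatrix e6 e6) := by
      ext (i | i) (j | j) <;> simp
    show Wb.submatrix ⇑(((Equiv.refl (Fin (2*n))).sumCongr e6).trans ρ)
        ⇑(((Equiv.refl (Fin (2*n))).sumCongr e6).trans ρ) = _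
    simp only [Equiv.coe_trans, ← Matrix.submatrix_submatrix]
    rw [stepA, stepB, hJ3]
  have hcore : Mbᵀ * Wb * Mb = Wb := core n A hA
  rw [hMglue, ← hWglue, Matrix.transpose_submatrix,
    Matrix.submatrix_mul_equiv Mbᵀ Wb _ σ _,
    Matrix.submatrix_mul_equiv (Mbᵀ * Wb) Mb _ σ _, hcore]
end

section
/- If D, E, F, G are 2×2 real matrices such that the 4×4 block matrix [[D,E],[F,G]] is symplectic (in Sp(4)), then the 8×8 block matrix [[0,D,E,0],[-D^T,0,0,-F^T],[0,F,G,0],[-E^T,0,0,-G^T]] is symplectic (in Sp(8)). -/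
open Matrix

theorem aux_transpose_symp {n : Type*} [Fintype n] [DecidableEq n]
    (M K : Matrix n n ℝ) (h : Mᵀ * K * M = K) (hKK : K * K = -1) :
    M * K * Mᵀ = K := by
  have hleft : (-(K * Mᵀ * K)) * M = 1 := by
    calc (-(K * Mᵀ * K)) * M = -(K * (Mᵀ * K * M)) := by noncomm_ring
    _ = 1 := by rw [h, hKK]; simp
  have hright : M * (-(K * Mᵀ * K)) = 1 := mul_eq_one_comm.mp hleft
  have e1 : M * K * Mᵀ * K = -1 := by
    have : -(M * (K * Mᵀ * K)) = 1 := by rw [← hright]; noncomm_ring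
    have h2 := congrArg Neg.neg this
    simp only [neg_neg] at h2
    rw [← h2]; noncomm_ring
  have := congrArg (· * K) e1
  rw [mul_assoc, hKK] at this
  calc M * K * Mᵀ = -(M * K * Mᵀ * -1) := by noncomm_ring
  _ = -(-1 * K) := by rw [this]
  _ = K := by noncomm_ring

/-- If [[D,E],[F,G]] ∈ Sp(4), then [[0,D,E,0],[-Dᵀ,0,0,-Fᵀ],[0,F,G,0],[-Eᵀ,0,0,-Gᵀ]] ∈ Sp(8). -/
theorem lemma19_symplectic (D E F G : Matrix (Fin 2) (Fin 2) ℝ)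
    (h : (Matrix.fromBlocks D E F G)ᵀ * Matrix.fromBlocks J2 0 0 J2 *
        Matrix.fromBlocks D E F G = Matrix.fromBlocks J2 0 0 J2) :
    (Matrix.fromBlocks
        (Matrix.fromBlocks 0 D (-Dᵀ) 0) (Matrix.fromBlocks E 0 0 (-Fᵀ))
        (Matrix.fromBlocks 0 F (-Eᵀ) 0) (Matrix.fromBlocks G 0 0 (-Gᵀ)))ᵀ *
      Matrix.fromBlocks (Matrix.fromBlocks J2 0 0 J2) 0 0 (Matrix.fromBlocks J2 0 0 J2) *
      Matrix.fromBlocks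
        (Matrix.fromBlocks 0 D (-Dᵀ) 0) (Matrix.fromBlocks E 0 0 (-Fᵀ))
        (Matrix.fromBlocks 0 F (-Eᵀ) 0) (Matrix.fromBlocks G 0 0 (-Gᵀ)) =
    Matrix.fromBlocks (Matrix.fromBlocks J2 0 0 J2) 0 0 (Matrix.fromBlocks J2 0 0 J2) := by
  have hJ2 : J2 * J2 = -1 := by
    ext i j; fin_cases i <;> fin_cases j <;> simp [J2, Matrix.mul_apply, Fin.sum_univ_two]
  have hKK : (Matrix.fromBlocks J2 0 0 J2 : Matrix (Fin 2 ⊕ Fin 2) _ ℝ) *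
      Matrix.fromBlocks J2 0 0 J2 = -1 := by
    simp only [Matrix.fromBlocks_multiply, Matrix.mul_zero, Matrix.zero_mul, add_zero, zero_add,
      hJ2]
    rw [← Matrix.fromBlocks_one, Matrix.fromBlocks_neg]
    simp
  have h' := aux_transpose_symp _ _ h hKK
  rw [Matrix.fromBlocks_transpose] at h h'
  simp only [Matrix.fromBlocks_multiply, Matrix.mul_zero, Matrix.zero_mul, add_zero,
    zero_add] at h h'
  rw [Matrix.fromBlocks_inj] at h h'
  obtain ⟨h1, h2, h3, h4⟩ := h
  obtain ⟨h1', h2', h3', h4'⟩ := h'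
  simp only [Matrix.fromBlocks_transpose, Matrix.fromBlocks_multiply, Matrix.mul_zero,
    Matrix.zero_mul, add_zero, zero_add, Matrix.transpose_zero, Matrix.transpose_neg,
    Matrix.transpose_transpose, Matrix.neg_mul, Matrix.mul_neg, neg_neg, neg_zero]
  rw [Matrix.fromBlocks_add, Matrix.fromBlocks_inj]
  refine ⟨?_, ?_, ?_, ?_⟩ <;>
    simp only [Matrix.fromBlocks_add, add_zero, zero_add, h1, h2, h3, h4, h1', h2', h3', h4',
      Matrix.fromBlocks_zero]
end

section
/- For any 2×2 real matrix D, the 4×4 skew-symmetric matrix [[0, D],[-D^T, 0]] admits a symplectic dilation of order 8. -/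
open Matrix

set_option linter.unreachableTactic false
set_option linter.unusedTactic false

set_option maxHeartbeats 1000000 in
/-- Dilation identity in the case `det D ≤ 1`. -/
theorem key1 (a b c e r : ℝ) (h : r*r = 1 - (a*e - b*c)) :
    (Matrix.fromBlocks (Matrix.fromBlocks 0 !![a,b;c,e] !![-a,-c;-b,-e] 0)
        (Matrix.fromBlocks 0 !![-r,0;0,-r] !![r,0;0,r] 0)
        (Matrix.fromBlocks 0 !![r,0;0,r] !![-r,0;0,-r] 0)
        (Matrix.fromBlocks 0 !![e,-b;-c,a] !![-e,c;b,-a] 0))ᵀ *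
        Matrix.fromBlocks (Matrix.fromBlocks J2 0 0 J2) 0 0 (Matrix.fromBlocks J2 0 0 J2) *
        (Matrix.fromBlocks (Matrix.fromBlocks 0 !![a,b;c,e] !![-a,-c;-b,-e] 0)
        (Matrix.fromBlocks 0 !![-r,0;0,-r] !![r,0;0,r] 0)
        (Matrix.fromBlocks 0 !![r,0;0,r] !![-r,0;0,-r] 0)
        (Matrix.fromBlocks 0 !![e,-b;-c,a] !![-e,c;b,-a] 0)) =
      Matrix.fromBlocks (Matrix.fromBlocks J2 0 0 J2) 0 0 (Matrix.fromBlocks J2 0 0 J2) := by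
  ext i j
  obtain ((i|i)|(i|i)) := i <;> obtain ((j|j)|(j|j)) := j <;>
    fin_cases i <;> fin_cases j <;>
    simp [Matrix.mul_apply, Fintype.sum_sum_type, Fin.sum_univ_two, J2,
      Matrix.fromBlocks, Matrix.transpose_apply] <;>
    (first
      | ring1
      | (linear_combination h)
      | (linear_combination -h))

set_option maxHeartbeats 1000000 in
/-- Dilation identity in the case `det D > 1`. -/
theorem key2 (a b c e p q : ℝ) (hpq : p*p + q*q = (a*e - b*c) - 1)
    (hw : p*(b+c) = q*(a-e)) :
    (Matrix.fromBlocks (Matrix.fromBlocks 0 !![a,b;c,e] !![-a,-c;-b,-e] 0)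
        (Matrix.fromBlocks 0 !![-p,-q;-q,p] !![p,q;q,-p] 0)
        (Matrix.fromBlocks 0 !![p,q;q,-p] !![-p,-q;-q,p] 0)
        (Matrix.fromBlocks 0 !![-e,c;b,-a] !![e,-b;-c,a] 0))ᵀ *
        Matrix.fromBlocks (Matrix.fromBlocks J2 0 0 J2) 0 0 (Matrix.fromBlocks J2 0 0 J2) *
        (Matrix.fromBlocks (Matrix.fromBlocks 0 !![a,b;c,e] !![-a,-c;-b,-e] 0)
        (Matrix.fromBlocks 0 !![-p,-q;-q,p] !![p,q;q,-p] 0)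
        (Matrix.fromBlocks 0 !![p,q;q,-p] !![-p,-q;-q,p] 0)
        (Matrix.fromBlocks 0 !![-e,c;b,-a] !![e,-b;-c,a] 0)) =
      Matrix.fromBlocks (Matrix.fromBlocks J2 0 0 J2) 0 0 (Matrix.fromBlocks J2 0 0 J2) := by
  ext i j
  obtain ((i|i)|(i|i)) := i <;> obtain ((j|j)|(j|j)) := j <;>
    fin_cases i <;> fin_cases j <;>
    simp [Matrix.mul_apply, Fintype.sum_sum_type, Fin.sum_univ_two, J2,
      Matrix.fromBlocks, Matrix.transpose_apply] <;>
    (first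
      | ring1
      | (linear_combination hpq)
      | (linear_combination -hpq)
      | (linear_combination hw)
      | (linear_combination -hw)
      | (linear_combination hpq + hw)
      | (linear_combination hpq - hw)
      | (linear_combination -hpq + hw)
      | (linear_combination -hpq - hw))

/-- Any 4×4 skew-symmetric matrix [[0,D],[-Dᵀ,0]] admits a symplectic dilation of order 8. -/
theorem skew_block_symplectic_dilation (D : Matrix (Fin 2) (Fin 2) ℝ) :
    ∃ (B : Matrix (Fin 2 ⊕ Fin 2) (Fin 2 ⊕ Fin 2) ℝ)
      (C : Matrix (Fin 2 ⊕ Fin 2) (Fin 2 ⊕ Fin 2) ℝ)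
      (R : Matrix (Fin 2 ⊕ Fin 2) (Fin 2 ⊕ Fin 2) ℝ),
      (Matrix.fromBlocks (Matrix.fromBlocks 0 D (-Dᵀ) 0) B C R)ᵀ *
        Matrix.fromBlocks (Matrix.fromBlocks J2 0 0 J2) 0 0 (Matrix.fromBlocks J2 0 0 J2) *
        Matrix.fromBlocks (Matrix.fromBlocks 0 D (-Dᵀ) 0) B C R =
      Matrix.fromBlocks (Matrix.fromBlocks J2 0 0 J2) 0 0 (Matrix.fromBlocks J2 0 0 J2) := by
  obtain ⟨a, b, c, e, hD⟩ : ∃ a b c e, D = !![a,b;c,e] :=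
    ⟨D 0 0, D 0 1, D 1 0, D 1 1, by ext i j; fin_cases i <;> fin_cases j <;> rfl⟩
  have hDT : -Dᵀ = !![-a,-c;-b,-e] := by
    rw [hD]; ext i j; fin_cases i <;> fin_cases j <;> rfl
  rcases le_or_gt (a*e - b*c) 1 with hle | hgt
  · -- det D ≤ 1
    set r : ℝ := Real.sqrt (1 - (a*e - b*c)) with hr
    have h : r*r = 1 - (a*e - b*c) := Real.mul_self_sqrt (by linarith)
    exact ⟨_, _, _, by rw [hDT, hD]; exact key1 a b c e r h⟩
  · -- det D > 1
    by_cases hm : (a-e)*(a-e) + (b+c)*(b+c) = 0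
    · -- D is conformal
      have h1 : a - e = 0 := by nlinarith [sq_nonneg (a-e), sq_nonneg (b+c)]
      have h2 : b + c = 0 := by nlinarith [sq_nonneg (a-e), sq_nonneg (b+c)]
      set p : ℝ := Real.sqrt ((a*e - b*c) - 1) with hp
      have hpq : p*p + (0:ℝ)*0 = (a*e - b*c) - 1 := by
        have := Real.mul_self_sqrt (show (0:ℝ) ≤ (a*e - b*c) - 1 by linarith)
        rw [← hp] at this; linarith
      have hw : p*(b+c) = (0:ℝ)*(a-e) := by rw [h2]; ring
      exact ⟨_, _, _, by rw [hDT, hD]; exact key2 a b c e p 0 hpq hw⟩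
    · -- generic case
      have hm' : 0 < (a-e)*(a-e) + (b+c)*(b+c) := by
        rcases lt_or_eq_of_le (add_nonneg (mul_self_nonneg (a-e)) (mul_self_nonneg (b+c))) with h | h
        · exact h
        · exact absurd h.symm hm
      set lam : ℝ := Real.sqrt (((a*e - b*c) - 1) / ((a-e)*(a-e) + (b+c)*(b+c))) with hlam
      have hll : lam*lam = ((a*e - b*c) - 1) / ((a-e)*(a-e) + (b+c)*(b+c)) :=
        Real.mul_self_sqrt (div_nonneg (by linarith) hm'.le)
      set p : ℝ := lam * (a-e) with hp
      set q : ℝ := lam * (b+c) with hq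
      have hpq : p*p + q*q = (a*e - b*c) - 1 := by
        have : p*p + q*q = (lam*lam) * ((a-e)*(a-e) + (b+c)*(b+c)) := by rw [hp, hq]; ring
        rw [this, hll, div_mul_cancel₀ _ (ne_of_gt hm')]
      have hw : p*(b+c) = q*(a-e) := by rw [hp, hq]; ring
      exact ⟨_, _, _, by rw [hDT, hD]; exact key2 a b c e p q hpq hw⟩
end

section
/- Let A be a 2n×2n real matrix, S a real positive semidefinite 2n×2n matrix with 2S - iJ_{2n} ≥ 0 (as a complex Hermitian matrix), and B a real symmetric 2n×2n matrix with B + i(A^T J_{2n} A - J_{2n}) ≥ 0. Then 2(A^T S A + ½B) - iJ_{2n} ≥ 0; equivalently, the transformation S ↦ A^T S A + ½B maps the set of Gaussian covariance matrices K_n = {S ≥ 0 : 2S - iJ_{2n} ≥ 0} into itself. -/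
open Matrix
open scoped ComplexOrder

/-- The quasifree transformation S ↦ AᵀSA + ½B maps Gaussian covariance matrices to
Gaussian covariance matrices. -/
theorem quasifree_preserves_gaussian_covariance {n : ℕ}
    (A S B : Matrix (Fin (2*n)) (Fin (2*n)) ℝ)
    (hS : S.PosSemidef)
    (hScov : ((2 : ℂ) • S.map (Complex.ofReal) -
        Complex.I • (J n).map (Complex.ofReal)).PosSemidef)
    (hBsymm : Bᵀ = B)
    (hB : (B.map (Complex.ofReal) +
        Complex.I • ((Aᵀ * J n * A - J n).map (Complex.ofReal))).PosSemidef) :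
    ((2 : ℂ) • ((Aᵀ * S * A + (1/2 : ℝ) • B).map (Complex.ofReal)) -
        Complex.I • (J n).map (Complex.ofReal)).PosSemidef := by
  set Ac := A.map (Complex.ofReal) with hAc
  have hAcH : Acᴴ = Aᵀ.map (Complex.ofReal) := by
    ext i j
    simp [hAc, conjTranspose_apply]
  have hmul : ∀ (X Y : Matrix (Fin (2*n)) (Fin (2*n)) ℝ),
      (X * Y).map (Complex.ofReal) = X.map Complex.ofReal * Y.map Complex.ofReal := fun X Y =>
    Matrix.map_mul (f := Complex.ofRealHom)
  have hadd : ∀ (X Y : Matrix (Fin (2*n)) (Fin (2*n)) ℝ),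
      (X + Y).map (Complex.ofReal) = X.map Complex.ofReal + Y.map Complex.ofReal := fun X Y => by
    ext i j; simp
  have hsub : ∀ (X Y : Matrix (Fin (2*n)) (Fin (2*n)) ℝ),
      (X - Y).map (Complex.ofReal) = X.map Complex.ofReal - Y.map Complex.ofReal := fun X Y => by
    ext i j; simp
  have hhalf : ((1/2 : ℝ) • B).map (Complex.ofReal) = (1/2 : ℂ) • B.map Complex.ofReal := by
    ext i j; simp
  have key : ((2 : ℂ) • ((Aᵀ * S * A + (1/2 : ℝ) • B).map (Complex.ofReal)) -
      Complex.I • (J n).map (Complex.ofReal)) =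
      Acᴴ * ((2 : ℂ) • S.map (Complex.ofReal) -
        Complex.I • (J n).map (Complex.ofReal)) * Ac +
      (B.map (Complex.ofReal) +
        Complex.I • ((Aᵀ * J n * A - J n).map (Complex.ofReal))) := by
    rw [hAcH, hAc, hadd, hhalf, hmul, hmul, hsub, hmul, hmul]
    rw [Matrix.mul_sub, Matrix.sub_mul, Matrix.mul_smul, Matrix.smul_mul,
      Matrix.mul_smul, Matrix.smul_mul]
    module
  rw [key]
  exact (hScov.conjTranspose_mul_mul_same Ac).add hB
end
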